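/- arXiv:1609.09216 — 2 statements merged into one kernel-verified Lean document; each statement's English description precedes it below -/
import Mathlib

section
/- Every P-ring is perinormal: if A is a Marot ring such that A_(P) is a Manis valuation ring of the total quotient ring for every prime P minimal over an ideal (bA : a) with a ∈ A and b regular, then every overring B of A with going down for A ⊆ B is flat as an A-module. -/
/-- A Marot ring: regular ideals are generated by their regular elements. -/
def IsMarot (A : Type*) [CommRing A] : Prop :=
  ∀ I : Ideal A, (∃ r ∈ I, r ∈ nonZeroDivisors A) →
    I = Ideal.span {r : A | r ∈ I ∧ r ∈ nonZeroDivisors A}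

/-- The underlying set of the regular quotient ring. -/
def rqSet {R K : Type*} [CommRing R] [CommRing K] (f : R →+* K) (P : Ideal R) : Set K :=
  {x | ∃ a s : R, s ∈ nonZeroDivisors R ∧ s ∉ P ∧ x * f s = f a}

/-- The regular quotient ring at a prime, as a subring of K. -/
def rqSub {R K : Type*} [CommRing R] [CommRing K] (f : R →+* K) (P : Ideal R)
    (hP : P.IsPrime) : Subring K where
  carrier := rqSet f P
  one_mem' := ⟨1, 1, Submonoid.one_mem _, fun h => hP.ne_top (P.eq_top_iff_one.mpr h), by simp⟩
  zero_mem' := ⟨0, 1, Submonoid.one_mem _, fun h => hP.ne_top (P.eq_top_iff_one.mpr h), by simp⟩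
  mul_mem' := by
    rintro x y ⟨a, s, hs, hsP, hx⟩ ⟨b, t, ht, htP, hy⟩
    refine ⟨a * b, s * t, mul_mem hs ht, fun h => ((hP.mem_or_mem h).elim hsP htP), ?_⟩
    rw [map_mul, map_mul]
    calc x * y * (f s * f t) = (x * f s) * (y * f t) := by ring
    _ = f a * f b := by rw [hx, hy]
  add_mem' := by
    rintro x y ⟨a, s, hs, hsP, hx⟩ ⟨b, t, ht, htP, hy⟩
    refine ⟨a * t + b * s, s * t, mul_mem hs ht, fun h => ((hP.mem_or_mem h).elim hsP htP), ?_⟩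
    rw [map_mul, map_add, map_mul, map_mul]
    calc (x + y) * (f s * f t) = (x * f s) * f t + (y * f t) * f s := by ring
    _ = f a * f t + f b * f s := by rw [hx, hy]
  neg_mem' := by
    rintro x ⟨a, s, hs, hsP, hx⟩
    exact ⟨-a, s, hs, hsP, by rw [map_neg, neg_mul, hx]⟩

/-- The canonical map into the regular quotient ring. -/
def toRq {R K : Type*} [CommRing R] [CommRing K] (f : R →+* K) (P : Ideal R)
    (hP : P.IsPrime) : R →+* rqSub f P hP :=
  f.codRestrict _ fun r =>
    ⟨r, 1, Submonoid.one_mem _, fun h => hP.ne_top (P.eq_top_iff_one.mpr h), by simp⟩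

/-- A Manis valuation pair of K. -/
def IsManisPair {K : Type*} [CommRing K] (V : Subring K) (M : Ideal V) : Prop :=
  M.IsPrime ∧ ∀ x : K, x ∉ V → ∃ y ∈ M, ∃ z : V, (z : K) = x * (y : K) ∧ z ∉ M

/-- The weakly Bourbaki associated primes of K/A. -/
def WBAssoc (A : Type*) [CommRing A] : Set (Ideal A) :=
  {P | ∃ a b : A, b ∈ nonZeroDivisors A ∧
    P ∈ ((Ideal.span {b}).colon (Ideal.span {a})).minimalPrimes}

/-- A regular prime P is valued if (A_(P), P·A_(P)) is a Manis valuation pair. -/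
def IsValuedPrime (A : Type*) [CommRing A] (P : Ideal A) : Prop :=
  ∃ hP : P.IsPrime,
    IsManisPair (rqSub (algebraMap A (Localization (nonZeroDivisors A))) P hP)
      (P.map (toRq (algebraMap A (Localization (nonZeroDivisors A))) P hP))

/-- A P-ring: every weakly Bourbaki associated prime of K/A is valued. -/
def PRing (A : Type*) [CommRing A] : Prop :=
  ∀ P ∈ WBAssoc A, IsValuedPrime A P

/-- Going down for a ring homomorphism. -/
def GoingDown {R S : Type*} [CommRing R] [CommRing S] (f : R →+* S) : Prop :=
  ∀ (P₁ P₂ : Ideal R), P₁.IsPrime → P₂.IsPrime → P₁ ≤ P₂ →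
    ∀ Q₂ : Ideal S, Q₂.IsPrime → Q₂.comap f = P₂ →
      ∃ Q₁ : Ideal S, Q₁.IsPrime ∧ Q₁ ≤ Q₂ ∧ Q₁.comap f = P₁

/-- A ring is perinormal if every going-down overring is flat. -/
def Perinormal (A : Type*) [CommRing A] : Prop :=
  ∀ B : Subalgebra A (Localization (nonZeroDivisors A)),
    GoingDown (algebraMap A B) → Module.Flat A B

/-!
Let `B` be a going-down overring, `M` a maximal ideal of `B` and `P = M ∩ A`. Write `x ∈ B` as
`a / b`, so that `(bA : a)` is the ideal of all `c` with `c x ∈ A`. If this ideal had no regular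
element outside `P`, the Marot property would put it inside `P`, hence inside a minimal prime
`P' ⊆ P` over it, which is valued. Going down yields a prime `Q` of `B` over `P'`, and the
Manis property forces `B ⊆ A_(P')`: otherwise some `y ∈ P' A_(P')` has
`x y ∈ A_(P') \ P' A_(P')`, yet clearing denominators puts `x y` into `Q ∩ A = P'`. But
`x ∈ A_(P')` contradicts `(bA : a) ⊆ P'`. So every element of `B` is carried into `A` by an
element of `A \ P`, which makes `B_M` the localization `A_P`, flat over `A`; and flatness is local
on the maximal ideals of `B`.
-/

section RegularLocalization

variable {R K : Type*} [CommRing R] [CommRing K] (f : R →+* K) (P : Ideal R) [hP : P.IsPrime]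

instance : Algebra R (rqSub f P hP) := (toRq f P hP).toAlgebra

theorem isLocalization_rqSub (hf : Function.Injective f)
    (hu : ∀ s ∈ nonZeroDivisors R, IsUnit (f s)) :
    IsLocalization (P.primeCompl ⊓ nonZeroDivisors R) (rqSub f P hP) := by
  refine ⟨fun s => ?_, fun z => ?_, fun {a₁ a₂} he => ⟨1, ?_⟩⟩
  · obtain ⟨u, hu⟩ := hu s s.2.2
    refine IsUnit.of_mul_eq_one ⟨(u⁻¹ : Kˣ), 1, s, s.2.2, s.2.1, by simp [← hu]⟩
      (Subtype.ext ?_)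
    change f s * _ = 1
    simp [← hu]
  · obtain ⟨a, s, hs, hsP, hz⟩ := z.2
    exact ⟨⟨a, s, hsP, hs⟩, Subtype.ext hz⟩
  · simpa using hf (congrArg Subtype.val he)

end RegularLocalization

theorem isLocalization_atPrime_of_forall_exists_mul_eq {A B : Type*} [CommRing A] [CommRing B]
    [Algebra A B] (hinj : Function.Injective (algebraMap A B)) (M : Ideal B) [M.IsPrime]
    (h : ∀ x : B, ∃ s ∉ M.comap (algebraMap A B), ∃ a,
      x * algebraMap A B s = algebraMap A B a) :
    IsLocalization (M.comap (algebraMap A B)).primeCompl (Localization.AtPrime M) := by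
  set P := M.comap (algebraMap A B)
  have hcompl : ∀ t ∉ M, ∃ s ∉ P, ∃ a ∉ P, t * algebraMap A B s = algebraMap A B a := by
    intro t ht
    obtain ⟨s, hs, a, ha⟩ := h t
    refine ⟨s, hs, a, fun haP => ?_, ha⟩
    rw [Ideal.mem_comap, ← ha] at haP
    exact (‹M.IsPrime›.mem_or_mem haP).elim ht hs
  have hφ := IsScalarTower.algebraMap_apply A B (Localization.AtPrime M)
  refine ⟨fun s => hφ s ▸ IsLocalization.map_units _ (⟨_, s.2⟩ : M.primeCompl),
    fun z => ?_, fun {a₁ a₂} he => ?_⟩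
  · obtain ⟨⟨x, t⟩, hz⟩ := IsLocalization.surj M.primeCompl z
    obtain ⟨s, hs, a, hxa⟩ := h x
    obtain ⟨s', -, a', ha', hta'⟩ := hcompl t t.2
    refine ⟨⟨a * s', s * a', P.primeCompl.mul_mem hs ha'⟩, ?_⟩
    simp only [hφ, map_mul, ← hxa, ← hta', ← hz]
    ring
  · rw [hφ, hφ] at he
    obtain ⟨t, ht⟩ := IsLocalization.exists_of_eq (M := M.primeCompl) he
    obtain ⟨s', -, a', ha', hta'⟩ := hcompl t t.2
    refine ⟨⟨a', ha'⟩, hinj ?_⟩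
    simp only [map_mul, ← hta']
    rw [mul_right_comm, ht, mul_right_comm]

theorem IsMarot.le_of_forall_mem_nonZeroDivisors {A : Type*} [CommRing A] (hM : IsMarot A)
    {I J : Ideal A} (hI : ∃ r ∈ I, r ∈ nonZeroDivisors A)
    (h : ∀ r ∈ I, r ∈ nonZeroDivisors A → r ∈ J) : I ≤ J := by
  rw [hM I hI, Ideal.span_le]
  exact fun r hr => h r hr.1 hr.2

theorem mem_colon_span_singleton_iff_exists_mul_eq {A K : Type*} [CommRing A] [CommRing K]
    [Algebra A K] [IsFractionRing A K] {x : K} {a b : A} (hb : b ∈ nonZeroDivisors A)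
    (hx : x * algebraMap A K b = algebraMap A K a) (c : A) :
    c ∈ (Ideal.span {b}).colon (Ideal.span {a}) ↔
      ∃ d, x * algebraMap A K c = algebraMap A K d := by
  have hbu : IsUnit (algebraMap A K b) :=
    IsLocalization.map_units K (⟨b, hb⟩ : nonZeroDivisors A)
  simp only [Ideal.mem_colon_span_singleton, Ideal.mem_span_singleton']
  refine exists_congr fun d =>
    ⟨fun h => hbu.mul_left_cancel ?_, fun h => IsFractionRing.injective A K ?_⟩
  · have h' := congrArg (algebraMap A K) h
    simp only [map_mul] at h'
    linear_combination algebraMap A K c * hx - h'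
  · simp only [map_mul]
    linear_combination algebraMap A K c * hx - algebraMap A K b * h

section PRing

variable {A : Type*} [CommRing A]

local notation "K" => Localization (nonZeroDivisors A)

theorem IsValuedPrime.coe_mem_rqSub {P : Ideal A} (hv : IsValuedPrime A P) {B : Subalgebra A K}
    (Q : Ideal B) [Q.IsPrime] (hQ : Q.comap (algebraMap A B) = P) (x : B) :
    (x : K) ∈ rqSub (algebraMap A K) P hv.fst := by
  obtain ⟨hP, -, hmanis⟩ := hv
  have := isLocalization_rqSub (algebraMap A K) P (IsFractionRing.injective A K)
    fun s hs => IsLocalization.map_units K ⟨s, hs⟩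
  by_contra hx
  obtain ⟨y, hy, z, hz, hzN⟩ := hmanis x hx
  obtain ⟨⟨⟨p, hp⟩, ⟨s, hsP, _⟩⟩, hys⟩ :=
    (IsLocalization.mem_map_algebraMap_iff (P.primeCompl ⊓ nonZeroDivisors A) _).mp hy
  obtain ⟨a, t, ht, htP, hzt⟩ := z.2
  have hxpt : x * algebraMap A B p * algebraMap A B t = algebraMap A B (a * s) := by
    apply Subtype.ext
    change (x : K) * algebraMap A K p * algebraMap A K t = algebraMap A K (a * s)
    have hys' : (y : K) * algebraMap A K s = algebraMap A K p := congrArg Subtype.val hys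
    rw [map_mul, ← hzt, hz, ← hys']
    ring
  have has : a * s ∈ P := by
    rw [← hQ, Ideal.mem_comap, ← hxpt]
    exact Q.mul_mem_right _ (Q.mul_mem_left _ (by rwa [← hQ] at hp))
  have ha : a ∈ P := (hP.mem_or_mem has).resolve_right hsP
  exact hzN ((IsLocalization.mem_map_algebraMap_iff (P.primeCompl ⊓ nonZeroDivisors A) _).mpr
    ⟨⟨⟨a, ha⟩, ⟨t, htP, ht⟩⟩, Subtype.ext hzt⟩)

theorem exists_mul_eq_algebraMap_of_goingDown (hM : IsMarot A) (hA : PRing A)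
    {B : Subalgebra A K} (hGD : GoingDown (algebraMap A B)) (M : Ideal B) [M.IsPrime] (x : B) :
    ∃ s ∉ M.comap (algebraMap A B), ∃ a, x * algebraMap A B s = algebraMap A B a := by
  set P := M.comap (algebraMap A B)
  obtain ⟨⟨a, b⟩, hab⟩ := IsLocalization.surj (nonZeroDivisors A) (x : K)
  have hcolon := mem_colon_span_singleton_iff_exists_mul_eq b.2 hab
  by_contra! h
  have hIP : (Ideal.span {(b : A)}).colon (Ideal.span {a}) ≤ P := by
    refine hM.le_of_forall_mem_nonZeroDivisors ⟨b, (hcolon b).mpr ⟨a, hab⟩, b.2⟩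
      fun r hr _ => ?_
    by_contra hrP
    obtain ⟨d, hd⟩ := (hcolon r).mp hr
    exact h r hrP d (Subtype.ext hd)
  obtain ⟨P', hP'min, hP'P⟩ := Ideal.exists_minimalPrimes_le hIP
  have hv := hA P' ⟨a, b, b.2, hP'min⟩
  obtain ⟨Q, hQ, -, hQP'⟩ := hGD P' P hv.fst inferInstance hP'P M ‹_› rfl
  obtain ⟨a₁, s, -, hsP', hxs⟩ := hv.coe_mem_rqSub Q hQP' x
  exact hsP' (hP'min.1.2 ((hcolon s).mpr ⟨a₁, hxs⟩))

end PRing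

theorem statement14 (A : Type*) [CommRing A] (hM : IsMarot A) (hA : PRing A) :
    Perinormal A := by
  intro B hGD
  have hinj : Function.Injective (algebraMap A B) := fun a₁ a₂ h =>
    IsFractionRing.injective A _ (congrArg Subtype.val h)
  refine Module.flat_of_isLocalized_maximal B B (fun M => Localization.AtPrime M)
    (fun M => Algebra.linearMap B _) fun M _ => ?_
  have := isLocalization_atPrime_of_forall_exists_mul_eq hinj M
    (exists_mul_eq_algebraMap_of_goingDown hM hA hGD M)
  exact IsLocalization.flat _ (M.comap (algebraMap A B)).primeCompl
end

section
/- Let A and B be commutative rings. The direct product A × B is perinormal if and only if both A and B are perinormal. -/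
/-!
The primes of `R₁ × R₂` are the ideals `p × R₂` and `R₁ × q`, so a product map `f × g` has going
down exactly when `f` and `g` do. A module over `R₁ × R₂` on which `(0, 1)` acts trivially is a
module over `R₁ = (R₁ × R₂)[(1, 0)⁻¹]`, and flatness over the two rings agrees. Since the total
quotient ring of `A × B` is `K(A) × K(B)` and every `A × B`-subalgebra of it is a product `C₁ × C₂`
of overrings, both conditions in the definition of perinormality split componentwise. Conversely,
a going-down overring `C₁` of `A` gives the going-down overring `C₁ × B` of `A × B`.
-/

open scoped nonZeroDivisors

namespace GoingDown

variable {R S T : Type*} [CommRing R] [CommRing S] [CommRing T]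

theorem comp {f : R →+* S} {g : S →+* T} (hg : GoingDown g) (hf : GoingDown f) :
    GoingDown (g.comp f) := by
  intro P₁ P₂ hP₁ hP₂ hle Q₂ hQ₂ hQ₂P₂
  obtain ⟨Q₁, hQ₁, hQ₁le, rfl⟩ :=
    hf P₁ P₂ hP₁ hP₂ hle (Q₂.comap g) (hQ₂.comap g) (by rwa [Ideal.comap_comap])
  obtain ⟨Q, hQ, hQle, rfl⟩ := hg Q₁ _ hQ₁ (hQ₂.comap g) hQ₁le Q₂ hQ₂ rfl
  exact ⟨Q, hQ, hQle, Ideal.comap_comap f g⟩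

theorem of_bijective {f : R →+* S} (hf : Function.Bijective f) : GoingDown f := by
  intro P₁ P₂ hP₁ _ hle Q₂ _ rfl
  refine ⟨P₁.map f, Ideal.map_isPrime_of_surjective hf.2 ?_, ?_, Ideal.comap_map_of_bijective f hf⟩
  · exact ((RingHom.injective_iff_ker_eq_bot f).mp hf.1).trans_le bot_le
  · exact (Ideal.map_mono hle).trans Ideal.map_comap_le

end GoingDown

section Algebra

variable {R S T : Type*} [CommRing R] [CommRing S] [CommRing T] [Algebra R S] [Algebra R T]

theorem goingDown_algebraMap_iff_of_algEquiv (e : S ≃ₐ[R] T) :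
    GoingDown (algebraMap R S) ↔ GoingDown (algebraMap R T) := by
  refine ⟨fun h ↦ ?_, fun h ↦ ?_⟩
  · rw [← e.toAlgHom.comp_algebraMap]
    exact (GoingDown.of_bijective e.bijective).comp h
  · rw [← e.symm.toAlgHom.comp_algebraMap]
    exact (GoingDown.of_bijective e.symm.bijective).comp h

theorem goingDown_algebraMap_bot (h : Function.Injective (algebraMap R S)) :
    GoingDown (algebraMap R (⊥ : Subalgebra R S)) :=
  (goingDown_algebraMap_iff_of_algEquiv (Algebra.botEquivOfInjective h)).mpr
    (.of_bijective Function.bijective_id)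

end Algebra

namespace Ideal

variable {R₁ R₂ S₁ S₂ : Type*} [CommRing R₁] [CommRing R₂] [CommRing S₁] [CommRing S₂]

theorem comap_prodMap_prod (f : R₁ →+* S₁) (g : R₂ →+* S₂) (I : Ideal S₁) (J : Ideal S₂) :
    (prod I J).comap (f.prodMap g) = prod (I.comap f) (J.comap g) := by
  ext; simp [mem_prod]

theorem prod_le_prod_iff {I I' : Ideal R₁} {J J' : Ideal R₂} :
    prod I J ≤ prod I' J' ↔ I ≤ I' ∧ J ≤ J' :=
  (idealProdEquiv.symm.le_iff_le (x := (I, J)) (y := (I', J'))).trans Prod.mk_le_mk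

end Ideal

section GoingDownProd

open Ideal

variable {R₁ R₂ S₁ S₂ : Type*} [CommRing R₁] [CommRing R₂] [CommRing S₁] [CommRing S₂]
  {f : R₁ →+* S₁} {g : R₂ →+* S₂}

theorem GoingDown.prodMap (hf : GoingDown f) (hg : GoingDown g) : GoingDown (f.prodMap g) := by
  intro P₁ P₂ hP₁ _ hle Q₂ hQ₂ rfl
  rcases (ideal_prod_prime Q₂).mp hQ₂ with ⟨q, hq, rfl⟩ | ⟨q, hq, rfl⟩ <;>
    rcases (ideal_prod_prime P₁).mp hP₁ with ⟨p, hp, rfl⟩ | ⟨p, hp, rfl⟩ <;>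
    simp only [comap_prodMap_prod, comap_top, prod_le_prod_iff] at hle
  · obtain ⟨q', hq', hq'q, rfl⟩ := hf p _ hp (hq.comap f) hle.1 q hq rfl
    exact ⟨prod q' ⊤, isPrime_ideal_prod_top, prod_mono_left hq'q, by simp [comap_prodMap_prod]⟩
  · exact absurd (top_le_iff.mp hle.1) (hq.comap f).ne_top
  · exact absurd (top_le_iff.mp hle.2) (hq.comap g).ne_top
  · obtain ⟨q', hq', hq'q, rfl⟩ := hg p _ hp (hq.comap g) hle.2 q hq rfl
    exact ⟨prod ⊤ q', isPrime_ideal_prod_top', prod_mono_right hq'q, by simp [comap_prodMap_prod]⟩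

theorem GoingDown.of_prodMap_left (h : GoingDown (f.prodMap g)) : GoingDown f := by
  intro P₁ P₂ hP₁ _ hle Q₂ hQ₂ rfl
  obtain ⟨Q, hQ, hQQ₂, hQP₁⟩ := h (prod P₁ ⊤) _ isPrime_ideal_prod_top
    (isPrime_ideal_prod_top (h := hQ₂.comap f)) (prod_mono_left hle) (prod Q₂ ⊤)
    isPrime_ideal_prod_top (by simp [comap_prodMap_prod])
  rcases (ideal_prod_prime Q).mp hQ with ⟨q, hq, rfl⟩ | ⟨q, hq, rfl⟩ <;>
    simp only [comap_prodMap_prod, comap_top, prod_inj, prod_le_prod_iff] at hQP₁ hQQ₂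
  · exact ⟨q, hq, hQQ₂.1, hQP₁.1⟩
  · exact absurd hQP₁.1.symm hP₁.ne_top

theorem GoingDown.of_prodMap_right (h : GoingDown (f.prodMap g)) : GoingDown g := by
  intro P₁ P₂ hP₁ _ hle Q₂ hQ₂ rfl
  obtain ⟨Q, hQ, hQQ₂, hQP₁⟩ := h (prod ⊤ P₁) _ isPrime_ideal_prod_top'
    (isPrime_ideal_prod_top' (h := hQ₂.comap g)) (prod_mono_right hle) (prod ⊤ Q₂)
    isPrime_ideal_prod_top' (by simp [comap_prodMap_prod])
  rcases (ideal_prod_prime Q).mp hQ with ⟨q, hq, rfl⟩ | ⟨q, hq, rfl⟩ <;>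
    simp only [comap_prodMap_prod, comap_top, prod_inj, prod_le_prod_iff] at hQP₁ hQQ₂
  · exact absurd hQP₁.2.symm hP₁.ne_top
  · exact ⟨q, hq, hQQ₂.2, hQP₁.2⟩

theorem goingDown_prodMap_iff : GoingDown (f.prodMap g) ↔ GoingDown f ∧ GoingDown g :=
  ⟨fun h ↦ ⟨h.of_prodMap_left, h.of_prodMap_right⟩, fun h ↦ h.1.prodMap h.2⟩

end GoingDownProd

theorem Module.Flat.prod_iff {R M N : Type*} [CommRing R] [AddCommGroup M] [AddCommGroup N]
    [Module R M] [Module R N] : Module.Flat R (M × N) ↔ Module.Flat R M ∧ Module.Flat R N := by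
  refine ⟨fun _ ↦ ⟨.of_retract _ _ (LinearMap.fst_comp_inl R M N),
    .of_retract _ _ (LinearMap.snd_comp_inr R M N)⟩, fun ⟨_, _⟩ ↦ ?_⟩
  refine iff_rTensor_injective'.mpr fun I ↦ ?_
  have hsquare : (TensorProduct.prodRight R R R M N).toLinearMap ∘ₗ
      (I.subtype.rTensor (M × N)) = (I.subtype.rTensor M).prodMap (I.subtype.rTensor N) ∘ₗ
        (TensorProduct.prodRight R R I M N).toLinearMap :=
    TensorProduct.ext' fun _ _ ↦ rfl
  have hinj : Function.Injective ((I.subtype.rTensor M).prodMap (I.subtype.rTensor N) ∘ₗ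
      (TensorProduct.prodRight R R I M N).toLinearMap) :=
    ((rTensor_preserves_injective_linearMap _ I.injective_subtype).prodMap
      (rTensor_preserves_injective_linearMap _ I.injective_subtype)).comp (LinearEquiv.injective _)
  rw [← hsquare, LinearMap.coe_comp] at hinj
  exact hinj.of_comp

/-- Only a local instance: for `S₁ = R₁` and `S₂ = R₂` it would compete with `Algebra.id`. -/
abbrev Prod.algebraComponentwise {R₁ R₂ S₁ S₂ : Type*} [CommRing R₁] [CommRing R₂] [CommRing S₁]
    [CommRing S₂] [Algebra R₁ S₁] [Algebra R₂ S₂] : Algebra (R₁ × R₂) (S₁ × S₂) :=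
  ((algebraMap R₁ S₁).prodMap (algebraMap R₂ S₂)).toAlgebra

attribute [local instance] Prod.algebraComponentwise

section ProdAlgebra

variable {R₁ R₂ S₁ S₂ : Type*} [CommRing R₁] [CommRing R₂] [CommRing S₁] [CommRing S₂]
  [Algebra R₁ S₁] [Algebra R₂ S₂]

theorem Prod.algebraMap_componentwise_apply (r : R₁ × R₂) :
    algebraMap (R₁ × R₂) (S₁ × S₂) r = (algebraMap R₁ S₁ r.1, algebraMap R₂ S₂ r.2) :=
  rfl

/-- `R₁` is the localization of `R₁ × R₂` away from the idempotent `(1, 0)`, so for `R₁`-modules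
flatness over `R₁` and over `R₁ × R₂` agree. -/
theorem Module.Flat.prod_componentwise_iff :
    Module.Flat (R₁ × R₂) (S₁ × S₂) ↔ Module.Flat R₁ S₁ ∧ Module.Flat R₂ S₂ := by
  let _ := (RingHom.fst R₁ R₂).toAlgebra
  let _ := (RingHom.snd R₁ R₂).toAlgebra
  let _ : Algebra (R₁ × R₂) S₁ := ((algebraMap R₁ S₁).comp (RingHom.fst R₁ R₂)).toAlgebra
  let _ : Algebra (R₁ × R₂) S₂ := ((algebraMap R₂ S₂).comp (RingHom.snd R₁ R₂)).toAlgebra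
  have _ : IsScalarTower (R₁ × R₂) R₁ S₁ := .of_algebraMap_eq' rfl
  have _ : IsScalarTower (R₁ × R₂) R₂ S₂ := .of_algebraMap_eq' rfl
  exact Module.Flat.prod_iff.trans (and_congr
    (Module.flat_iff_of_isLocalization R₁ (.powers ((1, 0) : R₁ × R₂)) S₁).symm
    (Module.flat_iff_of_isLocalization R₂ (.powers ((0, 1) : R₁ × R₂)) S₂).symm)

end ProdAlgebra

theorem Prod.nonZeroDivisors_eq {R₁ R₂ : Type*} [CommRing R₁] [CommRing R₂] :
    (R₁ × R₂)⁰ = R₁⁰.prod R₂⁰ := by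
  ext ⟨a, b⟩
  simp only [Submonoid.mem_prod, ← isRegular_iff_mem_nonZeroDivisors, Prod.isRegular_mk]

instance IsLocalization.prod {R₁ R₂ S₁ S₂ : Type*} [CommRing R₁] [CommRing R₂] [CommRing S₁]
    [CommRing S₂] [Algebra R₁ S₁] [Algebra R₂ S₂] (M₁ : Submonoid R₁) (M₂ : Submonoid R₂)
    [IsLocalization M₁ S₁] [IsLocalization M₂ S₂] : IsLocalization (M₁.prod M₂) (S₁ × S₂) where
  map_units m := Prod.isUnit_iff.mpr
    ⟨map_units S₁ ⟨m.1.1, m.2.1⟩, map_units S₂ ⟨m.1.2, m.2.2⟩⟩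
  surj z := by
    obtain ⟨⟨x₁, s₁⟩, h₁⟩ := surj M₁ z.1
    obtain ⟨⟨x₂, s₂⟩, h₂⟩ := surj M₂ z.2
    exact ⟨⟨(x₁, x₂), ⟨(s₁, s₂), s₁.2, s₂.2⟩⟩, Prod.ext h₁ h₂⟩
  exists_of_eq {x y} h := by
    obtain ⟨c₁, h₁⟩ := exists_of_eq (M := M₁) (congrArg Prod.fst h)
    obtain ⟨c₂, h₂⟩ := exists_of_eq (M := M₂) (congrArg Prod.snd h)
    exact ⟨⟨(c₁, c₂), c₁.2, c₂.2⟩, Prod.ext h₁ h₂⟩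

namespace Subalgebra

variable {R₁ R₂ S₁ S₂ : Type*} [CommRing R₁] [CommRing R₂] [CommRing S₁] [CommRing S₂]
  [Algebra R₁ S₁] [Algebra R₂ S₂]

def prodComponentwise (D₁ : Subalgebra R₁ S₁) (D₂ : Subalgebra R₂ S₂) :
    Subalgebra (R₁ × R₂) (S₁ × S₂) where
  toSubsemiring := D₁.toSubsemiring.prod D₂.toSubsemiring
  algebraMap_mem' r := ⟨D₁.algebraMap_mem r.1, D₂.algebraMap_mem r.2⟩

def prodComponentwiseEquiv (D₁ : Subalgebra R₁ S₁) (D₂ : Subalgebra R₂ S₂) :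
    prodComponentwise D₁ D₂ ≃ₐ[R₁ × R₂] D₁ × D₂ where
  toFun c := (⟨c.1.1, c.2.1⟩, ⟨c.1.2, c.2.2⟩)
  invFun d := ⟨(d.1, d.2), d.1.2, d.2.2⟩
  map_mul' _ _ := rfl
  map_add' _ _ := rfl
  commutes' _ := rfl

def fstOfProd (C : Subalgebra (R₁ × R₂) (S₁ × S₂)) : Subalgebra R₁ S₁ where
  toSubsemiring := C.toSubsemiring.map (RingHom.fst S₁ S₂)
  algebraMap_mem' r := ⟨_, C.algebraMap_mem (r, 0), rfl⟩

def sndOfProd (C : Subalgebra (R₁ × R₂) (S₁ × S₂)) : Subalgebra R₂ S₂ where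
  toSubsemiring := C.toSubsemiring.map (RingHom.snd S₁ S₂)
  algebraMap_mem' r := ⟨_, C.algebraMap_mem (0, r), rfl⟩

theorem prodComponentwise_fstOfProd_sndOfProd (C : Subalgebra (R₁ × R₂) (S₁ × S₂)) :
    prodComponentwise (fstOfProd C) (sndOfProd C) = C := by
  refine le_antisymm (fun x ⟨⟨y, hy, hyx⟩, ⟨z, hz, hzx⟩⟩ ↦ ?_) fun x hx ↦ ⟨⟨x, hx, rfl⟩, ⟨x, hx, rfl⟩⟩
  have hx : x = algebraMap (R₁ × R₂) (S₁ × S₂) (1, 0) * y +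
      algebraMap (R₁ × R₂) (S₁ × S₂) (0, 1) * z := by
    ext <;> simp [Prod.algebraMap_componentwise_apply, ← hyx, ← hzx]
  rw [hx]
  exact add_mem (mul_mem (C.algebraMap_mem _) hy) (mul_mem (C.algebraMap_mem _) hz)

end Subalgebra

/-- `Perinormal R` is this property for `T = Localization R⁰`. -/
def GoingDownSubalgebrasFlat (R T : Type*) [CommRing R] [CommRing T] [Algebra R T] : Prop :=
  ∀ C : Subalgebra R T, GoingDown (algebraMap R C) → Module.Flat R C

section Transport

variable {R S T : Type*} [CommRing R] [CommRing S] [CommRing T] [Algebra R S] [Algebra R T]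

theorem GoingDownSubalgebrasFlat.of_algEquiv (e : S ≃ₐ[R] T) (h : GoingDownSubalgebrasFlat R S) :
    GoingDownSubalgebrasFlat R T := fun C hC ↦
  let σ := e.symm.subalgebraMap C
  (Module.Flat.equiv_iff σ.toLinearEquiv).mpr (h _ ((goingDown_algebraMap_iff_of_algEquiv σ).mp hC))

variable (T) in
theorem perinormal_iff_of_isLocalization [IsLocalization R⁰ T] :
    Perinormal R ↔ GoingDownSubalgebrasFlat R T :=
  let e := IsLocalization.algEquiv R⁰ (Localization R⁰) T
  ⟨.of_algEquiv e, GoingDownSubalgebrasFlat.of_algEquiv e.symm⟩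

end Transport

section Componentwise

open Subalgebra

variable {R₁ R₂ S₁ S₂ : Type*} [CommRing R₁] [CommRing R₂] [CommRing S₁] [CommRing S₂]
  [Algebra R₁ S₁] [Algebra R₂ S₂]

theorem goingDown_prodComponentwise_iff (D₁ : Subalgebra R₁ S₁) (D₂ : Subalgebra R₂ S₂) :
    GoingDown (algebraMap (R₁ × R₂) (prodComponentwise D₁ D₂)) ↔
      GoingDown (algebraMap R₁ D₁) ∧ GoingDown (algebraMap R₂ D₂) :=
  (goingDown_algebraMap_iff_of_algEquiv (prodComponentwiseEquiv D₁ D₂)).trans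
    goingDown_prodMap_iff

theorem flat_prodComponentwise_iff (D₁ : Subalgebra R₁ S₁) (D₂ : Subalgebra R₂ S₂) :
    Module.Flat (R₁ × R₂) (prodComponentwise D₁ D₂) ↔ Module.Flat R₁ D₁ ∧ Module.Flat R₂ D₂ :=
  (Module.Flat.equiv_iff (prodComponentwiseEquiv D₁ D₂).toLinearEquiv).trans
    Module.Flat.prod_componentwise_iff

theorem goingDownSubalgebrasFlat_prod_iff (h₁ : Function.Injective (algebraMap R₁ S₁))
    (h₂ : Function.Injective (algebraMap R₂ S₂)) :
    GoingDownSubalgebrasFlat (R₁ × R₂) (S₁ × S₂) ↔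
      GoingDownSubalgebrasFlat R₁ S₁ ∧ GoingDownSubalgebrasFlat R₂ S₂ := by
  refine ⟨fun h ↦ ⟨fun D₁ hD₁ ↦ ?_, fun D₂ hD₂ ↦ ?_⟩, fun ⟨hS₁, hS₂⟩ C hC ↦ ?_⟩
  · exact ((flat_prodComponentwise_iff D₁ ⊥).mp (h _
      ((goingDown_prodComponentwise_iff D₁ ⊥).mpr ⟨hD₁, goingDown_algebraMap_bot h₂⟩))).1
  · exact ((flat_prodComponentwise_iff ⊥ D₂).mp (h _
      ((goingDown_prodComponentwise_iff ⊥ D₂).mpr ⟨goingDown_algebraMap_bot h₁, hD₂⟩))).2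
  · rw [← prodComponentwise_fstOfProd_sndOfProd C] at hC ⊢
    obtain ⟨hC₁, hC₂⟩ := (goingDown_prodComponentwise_iff _ _).mp hC
    exact (flat_prodComponentwise_iff _ _).mpr ⟨hS₁ _ hC₁, hS₂ _ hC₂⟩

end Componentwise

theorem statement19 (A B : Type*) [CommRing A] [CommRing B] :
    Perinormal (A × B) ↔ (Perinormal A ∧ Perinormal B) := by
  have : IsLocalization (A × B)⁰ (Localization A⁰ × Localization B⁰) :=
    Prod.nonZeroDivisors_eq (R₁ := A) (R₂ := B) ▸ inferInstance
  exact (perinormal_iff_of_isLocalization _).trans <| goingDownSubalgebrasFlat_prod_iff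
    (IsLocalization.injective _ le_rfl) (IsLocalization.injective _ le_rfl)
end
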